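/- arXiv:2603.29920 — 3 statements merged into one kernel-verified Lean document; each statement's English description precedes it below -/
import Mathlib

section
/- Let n be a positive integer and let W be an n×n complex matrix that is normal (W W* = W* W). Suppose every eigenvalue λ of W satisfies either λ = 0 or |1 − λ| < 1. Then for every s₀ ∈ ℂⁿ, the sequence s_m = (I − W)^m s₀ converges as m → ∞, and its limit equals the orthogonal projection of s₀ onto the kernel of W. -/
/-!
Let `P` be the orthogonal projection onto `ker W`. Normality makes `range W` orthogonal to
`ker W`, so `P W = W P = 0` and `(1 - W) ^ m = (1 - P - W) ^ m (1 - P) + P`. An eigenvector of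
`1 - P - W` for a nonzero eigenvalue `μ` lies in `(ker W)ᗮ` and is an eigenvector of `W` for
`1 - μ ≠ 0`, so the hypothesis puts the spectrum of `1 - P - W` in the open unit disc; by
Gelfand's formula its powers then tend to `0`.
-/

open Matrix Filter Topology

theorem spectralRadius_lt_one_of_forall_mem_spectrum {𝕜 A : Type*} [NontriviallyNormedField 𝕜]
    [ProperSpace 𝕜] [NormedRing A] [NormedAlgebra 𝕜 A] [CompleteSpace A] {a : A}
    (ha : ∀ μ ∈ spectrum 𝕜 a, ‖μ‖ < 1) : spectralRadius 𝕜 a < 1 := by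
  rcases (spectrum 𝕜 a).eq_empty_or_nonempty with hempty | hne
  · simp [spectralRadius, hempty]
  · exact_mod_cast spectrum.spectralRadius_lt_of_forall_lt_of_nonempty hne fun μ hμ ↦
      (by exact_mod_cast ha μ hμ : ‖μ‖₊ < 1)

theorem tendsto_pow_atTop_nhds_zero_of_spectralRadius_lt_one {A : Type*} [NormedRing A]
    [NormedAlgebra ℂ A] [CompleteSpace A] {a : A}
    (ha : spectralRadius ℂ a < 1) : Tendsto (fun n : ℕ ↦ a ^ n) atTop (𝓝 0) := by
  obtain ⟨r, hr0, hρr, hr1⟩ := ENNReal.lt_iff_exists_real_btwn.mp ha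
  have hroot : ∀ᶠ n : ℕ in atTop, ‖a ^ n‖ ^ (1 / n : ℝ) < r := by
    filter_upwards [(spectrum.pow_norm_pow_one_div_tendsto_nhds_spectralRadius a).eventually
      (gt_mem_nhds hρr)] with n hn
    exact (ENNReal.ofReal_lt_ofReal_iff'.mp hn).1
  have hbound : ∀ᶠ n : ℕ in atTop, ‖a ^ n‖ ≤ r ^ n := by
    filter_upwards [hroot, eventually_ne_atTop 0] with n hn hn0
    calc ‖a ^ n‖ = (‖a ^ n‖ ^ (n⁻¹ : ℝ)) ^ n :=
          (Real.rpow_inv_natCast_pow (norm_nonneg _) hn0).symm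
      _ ≤ r ^ n := by rw [← one_div]; gcongr
  exact squeeze_zero_norm' hbound
    (tendsto_pow_atTop_nhds_zero_of_lt_one hr0 (by exact_mod_cast ENNReal.ofReal_lt_one.mp hr1))

theorem one_sub_pow_eq_of_isIdempotentElem {R : Type*} [Ring R] {P T : R}
    (hP : IsIdempotentElem P) (hTP : T * P = 0) (hPT : P * T = 0) (m : ℕ) :
    (1 - T) ^ m = (1 - P - T) ^ m * (1 - P) + P := by
  have hP_one_sub : P * (1 - T) = P := by rw [mul_sub, hPT, mul_one, sub_zero]
  have h_one_sub : (1 - P) * (1 - T) = (1 - P - T) * (1 - P) := by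
    simp only [mul_sub, sub_mul, one_mul, mul_one, hP.eq, hTP, hPT]
    abel
  induction m with
  | zero => simp
  | succ m ih =>
    rw [pow_succ, ih, add_mul, mul_assoc, h_one_sub, hP_one_sub, ← mul_assoc, ← pow_succ]

namespace ContinuousLinearMap

section RCLike

variable {𝕜 E : Type*} [RCLike 𝕜] [NormedAddCommGroup E] [InnerProductSpace 𝕜 E]
  {T : E →L[𝕜] E} [(T : E →ₗ[𝕜] E).ker.HasOrthogonalProjection]

theorem mul_starProjection_ker : T * (T : E →ₗ[𝕜] E).ker.starProjection = 0 := by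
  ext x
  exact (T : E →ₗ[𝕜] E).ker.starProjection_apply_mem x

theorem IsStarNormal.starProjection_ker_mul [CompleteSpace E] (hT : IsStarNormal T) :
    (T : E →ₗ[𝕜] E).ker.starProjection * T = 0 := by
  ext x
  rw [mul_apply_eq_comp, _root_.zero_apply, Submodule.starProjection_apply_eq_zero_iff,
    ← IsStarNormal.orthogonal_range hT]
  exact Submodule.le_orthogonal_orthogonal _ (LinearMap.mem_range_self _ x)

end RCLike

theorem mem_spectrum_iff_exists_apply_eq_smul {𝕜 E : Type*} [NontriviallyNormedField 𝕜]
    [CompleteSpace 𝕜] [NormedAddCommGroup E] [NormedSpace 𝕜 E] [FiniteDimensional 𝕜 E]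
    {T : E →L[𝕜] E} {μ : 𝕜} : μ ∈ spectrum 𝕜 T ↔ ∃ x ≠ 0, T x = μ • x := by
  have : CompleteSpace E := FiniteDimensional.complete 𝕜 E
  rw [spectrum_eq, ← Module.End.hasEigenvalue_iff_mem_spectrum]
  constructor
  · intro hμ
    obtain ⟨x, hx⟩ := hμ.exists_hasEigenvector
    exact ⟨x, hx.2, hx.apply_eq_smul⟩
  · rintro ⟨x, hx0, hx⟩
    exact Module.End.hasEigenvalue_of_hasEigenvector ⟨Module.End.mem_eigenspace_iff.mpr hx, hx0⟩

variable {E : Type*} [NormedAddCommGroup E] [InnerProductSpace ℂ E] [FiniteDimensional ℂ E]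
  {T : E →L[ℂ] E}

theorem norm_lt_one_of_mem_spectrum_one_sub_starProjection_ker_sub
    (hPT : (T : E →ₗ[ℂ] E).ker.starProjection * T = 0)
    (hspec : ∀ μ ∈ spectrum ℂ T, μ = 0 ∨ ‖1 - μ‖ < 1) {μ : ℂ}
    (hμ : μ ∈ spectrum ℂ (1 - (T : E →ₗ[ℂ] E).ker.starProjection - T)) : ‖μ‖ < 1 := by
  set P := (T : E →ₗ[ℂ] E).ker.starProjection
  obtain ⟨x, hx0, hAx⟩ := mem_spectrum_iff_exists_apply_eq_smul.mp hμ
  have hPA : P * (1 - P - T) = 0 := by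
    rw [mul_sub, mul_sub, mul_one, (Submodule.isIdempotentElem_starProjection _).eq, hPT, sub_self,
      sub_zero]
  have hμPx : μ • P x = 0 := by
    rw [← map_smul, ← hAx, ← mul_apply_eq_comp, hPA, _root_.zero_apply]
  rcases eq_or_ne μ 0 with rfl | hμ0
  · simp
  have hPx : P x = 0 := (smul_eq_zero.mp hμPx).resolve_left hμ0
  have hTx : T x = (1 - μ) • x := by
    simp only [_root_.sub_apply, one_apply_eq_self, hPx, sub_zero] at hAx
    rw [sub_smul, one_smul, ← hAx, sub_sub_cancel]
  rcases hspec (1 - μ) (mem_spectrum_iff_exists_apply_eq_smul.mpr ⟨x, hx0, hTx⟩) with h | h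
  · have hx : x ∈ (T : E →ₗ[ℂ] E).ker := by simp [hTx, h]
    exact absurd (Submodule.starProjection_eq_self_iff.mpr hx ▸ hPx) hx0
  · simpa using h

theorem tendsto_one_sub_pow_starProjection_ker (hT : IsStarNormal T)
    (hspec : ∀ μ ∈ spectrum ℂ T, μ = 0 ∨ ‖1 - μ‖ < 1) :
    Tendsto (fun m : ℕ ↦ (1 - T) ^ m) atTop (𝓝 (T : E →ₗ[ℂ] E).ker.starProjection) := by
  set P := (T : E →ₗ[ℂ] E).ker.starProjection
  have hPT : P * T = 0 := IsStarNormal.starProjection_ker_mul hT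
  have hA : Tendsto (fun m : ℕ ↦ (1 - P - T) ^ m) atTop (𝓝 0) :=
    tendsto_pow_atTop_nhds_zero_of_spectralRadius_lt_one <|
      spectralRadius_lt_one_of_forall_mem_spectrum fun _ hμ ↦
        norm_lt_one_of_mem_spectrum_one_sub_starProjection_ker_sub hPT hspec hμ
  have hlim := (hA.mul_const (1 - P)).add_const P
  rw [zero_mul, zero_add] at hlim
  simpa only [one_sub_pow_eq_of_isIdempotentElem (Submodule.isIdempotentElem_starProjection _)
    mul_starProjection_ker hPT] using hlim

end ContinuousLinearMap

theorem Matrix.det_sub_smul_one_eq_zero_of_mem_spectrum {n K : Type*} [Fintype n]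
    [DecidableEq n] [Field K] {W : Matrix n n K} {μ : K} (hμ : μ ∈ spectrum K W) :
    (W - μ • (1 : Matrix n n K)).det = 0 := by
  rw [spectrum.mem_iff, Matrix.isUnit_iff_isUnit_det, isUnit_iff_ne_zero, not_not,
    Algebra.algebraMap_eq_smul_one] at hμ
  rw [← neg_sub, det_neg, hμ, mul_zero]

theorem general_discrete_IF_convergence_general
    (n : ℕ) (W : Matrix (Fin n) (Fin n) ℂ)
    (hNormal : W * Wᴴ = Wᴴ * W)
    (hEig : ∀ lam : ℂ, (W - lam • (1 : Matrix (Fin n) (Fin n) ℂ)).det = 0 →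
      lam = 0 ∨ ‖1 - lam‖ < 1)
    (s₀ : EuclideanSpace ℂ (Fin n)) :
    Tendsto (fun m : ℕ => Matrix.toEuclideanLin ((1 - W) ^ m) s₀) atTop
      (nhds ((Submodule.orthogonalProjection (LinearMap.ker (Matrix.toEuclideanLin W)) s₀ :
        EuclideanSpace ℂ (Fin n)))) := by
  set T := toEuclideanCLM (𝕜 := ℂ) W
  have hW : IsStarNormal W := ⟨hNormal.symm⟩
  have hT : IsStarNormal T := IsStarNormal.map (toEuclideanCLM (𝕜 := ℂ)) W
  have hspec : ∀ μ ∈ spectrum ℂ T, μ = 0 ∨ ‖1 - μ‖ < 1 := fun μ hμ ↦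
    hEig μ <| det_sub_smul_one_eq_zero_of_mem_spectrum <|
      AlgEquiv.spectrum_eq (toEuclideanCLM (𝕜 := ℂ)) W ▸ hμ
  have hpow (m : ℕ) : toEuclideanLin ((1 - W) ^ m) s₀ = ((1 - T) ^ m) s₀ := by
    rw [← coe_toEuclideanCLM_eq_toEuclideanLin, map_pow, map_sub, map_one]
    rfl
  simp_rw [hpow, ← coe_toEuclideanCLM_eq_toEuclideanLin]
  exact ((ContinuousLinearMap.apply ℂ _ s₀).continuous.tendsto _).comp
    (ContinuousLinearMap.tendsto_one_sub_pow_starProjection_ker hT hspec)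

/-- Sufficiency part of Theorem 3.1 (General discrete IF convergence):
if `W` is normal and every eigenvalue `λ` of `W` satisfies `λ = 0` or `|1 - λ| < 1`,
then `(I - W)^m s₀` converges to the orthogonal projection of `s₀` onto `ker W`. -/
theorem general_discrete_IF_convergence
    (n : ℕ) (hn : 0 < n) (W : Matrix (Fin n) (Fin n) ℂ)
    (hNormal : W * Wᴴ = Wᴴ * W)
    (hEig : ∀ lam : ℂ, (W - lam • (1 : Matrix (Fin n) (Fin n) ℂ)).det = 0 →
      lam = 0 ∨ ‖1 - lam‖ < 1)
    (s₀ : EuclideanSpace ℂ (Fin n)) :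
    Tendsto (fun m : ℕ => Matrix.toEuclideanLin ((1 - W) ^ m) s₀) atTop
      (nhds ((Submodule.orthogonalProjection (LinearMap.ker (Matrix.toEuclideanLin W)) s₀ :
        EuclideanSpace ℂ (Fin n)))) :=
  general_discrete_IF_convergence_general n W hNormal hEig s₀
end

section
/- Let n be a positive integer and let W be an n×n complex normal matrix (W W* = W* W) all of whose eigenvalues λ satisfy λ = 0 or |1 − λ| < 1. For any s₀ ∈ ℂⁿ, the limit s_∞ of the sequence s_m = (I − W)^m s₀ satisfies W s_∞ = 0, i.e., the limit of the sifting process lies in the kernel of W. -/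
/-!
Since `W` is normal, `(1 - W)^m` is `f_m(W)` in the continuous functional calculus, with
`f_m(z) = (1 - z)^m`. On the (finite) spectrum, `f_m` converges pointwise, hence uniformly,
to the indicator `e` of `{0}`, so `(1 - W)^m → e(W)`; and `W e(W) = (z ↦ z e(z))(W) = 0`.
-/

open Matrix Filter Topology

theorem Set.Finite.tendstoUniformlyOn_of_forall_tendsto {ι α β : Type*} [UniformSpace β]
    {F : ι → α → β} {f : α → β} {l : Filter ι} {s : Set α} (hs : s.Finite)
    (h : ∀ x ∈ s, Tendsto (F · x) l (𝓝 (f x))) : TendstoUniformlyOn F f l s :=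
  fun _ hu => hs.eventually_all.2 fun x hx => Uniform.tendsto_nhds_right.1 (h x hx) hu

theorem tendsto_one_sub_pow_ite {R : Type*} [NormedRing R] [DecidableEq R] {z : R}
    (hz : z = 0 ∨ ‖1 - z‖ < 1) :
    Tendsto (fun m : ℕ => (1 - z) ^ m) atTop (𝓝 (if z = 0 then 1 else 0)) := by
  rcases eq_or_ne z 0 with rfl | hz0
  · simp
  · simpa [hz0] using tendsto_pow_atTop_nhds_zero_of_norm_lt_one (hz.resolve_left hz0)

theorem Matrix.mem_spectrum_iff_det_sub_smul_eq_zero {n K : Type*} [Fintype n] [DecidableEq n]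
    [Field K] (A : Matrix n n K) (z : K) :
    z ∈ spectrum K A ↔ (A - z • (1 : Matrix n n K)).det = 0 := by
  rw [spectrum.mem_iff, isUnit_iff_isUnit_det, isUnit_iff_ne_zero, not_not,
    Algebra.algebraMap_eq_smul_one, ← neg_sub, det_neg, mul_eq_zero]
  simp

namespace CStarAlgebra

variable {A : Type*} [CStarAlgebra A] {a : A} [IsStarNormal a]

theorem tendsto_one_sub_pow (hfin : (spectrum ℂ a).Finite)
    (hspec : ∀ z ∈ spectrum ℂ a, z = 0 ∨ ‖1 - z‖ < 1) :
    Tendsto (fun m : ℕ => (1 - a) ^ m) atTop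
      (𝓝 (cfc (fun z : ℂ => if z = 0 then 1 else 0) a)) := by
  refine (tendsto_cfc_fun (F := fun (m : ℕ) (z : ℂ) => (1 - z) ^ m)
    (hfin.tendstoUniformlyOn_of_forall_tendsto fun z hz => tendsto_one_sub_pow_ite (hspec z hz))
    (Eventually.of_forall fun m => by fun_prop)).congr fun m => ?_
  rw [cfc_pow .., cfc_sub .., cfc_const_one .., cfc_id' ..]

theorem mul_cfc_ite_eq_zero (hfin : (spectrum ℂ a).Finite) :
    a * cfc (fun z : ℂ => if z = 0 then 1 else 0) a = 0 :=
  calc a * cfc (fun z : ℂ => if z = 0 then 1 else 0) a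
      = cfc (fun z : ℂ => z * if z = 0 then 1 else 0) a := by
        rw [cfc_mul (hg := hfin.continuousOn _) .., cfc_id' ..]
    _ = cfc (0 : ℂ → ℂ) a := cfc_congr fun z _ => by by_cases hz : z = 0 <;> simp [hz]
    _ = 0 := cfc_zero ℂ a

end CStarAlgebra

theorem sifting_limit_in_kernel_general
    (n : ℕ) (W : Matrix (Fin n) (Fin n) ℂ)
    (hNormal : W * Wᴴ = Wᴴ * W)
    (hEig : ∀ lam : ℂ, (W - lam • (1 : Matrix (Fin n) (Fin n) ℂ)).det = 0 →
      lam = 0 ∨ ‖1 - lam‖ < 1)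
    (s₀ : EuclideanSpace ℂ (Fin n)) :
    ∃ sInf : EuclideanSpace ℂ (Fin n),
      Tendsto (fun m : ℕ => Matrix.toEuclideanLin ((1 - W) ^ m) s₀) atTop (nhds sInf) ∧
      Matrix.toEuclideanLin W sInf = 0 := by
  let Φ := toEuclideanCLM (n := Fin n) (𝕜 := ℂ)
  let T := Φ W
  have : IsStarNormal T := ⟨by
    simp only [Commute, SemiconjBy, T, Φ, ← map_star, ← map_mul, star_eq_conjTranspose, hNormal]⟩
  have hspec : spectrum ℂ T = spectrum ℂ W := AlgEquiv.spectrum_eq Φ.toAlgEquiv W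
  have hfin : (spectrum ℂ T).Finite := hspec ▸ W.finite_spectrum
  have hlim := CStarAlgebra.tendsto_one_sub_pow hfin fun z hz =>
    hEig z ((W.mem_spectrum_iff_det_sub_smul_eq_zero z).1 (hspec ▸ hz))
  refine ⟨cfc (fun z : ℂ => if z = 0 then 1 else 0) T s₀, ?_, ?_⟩
  · refine (((ContinuousLinearMap.apply ℂ _ s₀).continuous.tendsto _).comp hlim).congr fun m => ?_
    change ((1 - T) ^ m) s₀ = Φ ((1 - W) ^ m) s₀
    rw [map_pow, map_sub, map_one]
  · exact congr($(CStarAlgebra.mul_cfc_ite_eq_zero hfin) s₀)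

/-- The limit of the sifting process lies in the kernel of `W`: under the hypotheses of
Theorem 3.1, for every `s₀` the sequence `(I - W)^m s₀` converges to some `s_∞`
with `W s_∞ = 0`. -/
theorem sifting_limit_in_kernel
    (n : ℕ) (hn : 0 < n) (W : Matrix (Fin n) (Fin n) ℂ)
    (hNormal : W * Wᴴ = Wᴴ * W)
    (hEig : ∀ lam : ℂ, (W - lam • (1 : Matrix (Fin n) (Fin n) ℂ)).det = 0 →
      lam = 0 ∨ ‖1 - lam‖ < 1)
    (s₀ : EuclideanSpace ℂ (Fin n)) :
    ∃ sInf : EuclideanSpace ℂ (Fin n),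
      Tendsto (fun m : ℕ => Matrix.toEuclideanLin ((1 - W) ^ m) s₀) atTop (nhds sInf) ∧
      Matrix.toEuclideanLin W sInf = 0 :=
  sifting_limit_in_kernel_general n W hNormal hEig s₀
end

section
/- Let n be a positive integer and let B be an n×n real matrix that is symmetric, has all entries nonnegative, and has each row summing to 1 (i.e., B is symmetric and row-stochastic). Set W = B·B. Then for every s₀ ∈ ℝⁿ, the sequence s_m = (I − W)^m s₀ converges as m → ∞ to the orthogonal projection of s₀ onto the kernel of W. -/
/-!
Write `W = B²` as an operator on Euclidean space. Since `B` is doubly stochastic it is a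
contraction for the Euclidean norm (Jensen's inequality row by row), so every eigenvalue
`μ = ‖B v‖² / ‖v‖²` of `W` lies in `[0, 1]`. Expanding `s₀` in an orthonormal eigenbasis of the
symmetric operator `W`, `(I - W)^m` multiplies the coefficient of an eigenvector by `(1 - μ)^m`:
this is `1` on `ker W` and tends to `0` on its orthogonal complement, spanned by the eigenvectors
with `μ ≠ 0`.
-/

open Matrix Filter Topology

section

variable {R M : Type*} [CommRing R] [AddCommGroup M] [Module R M]

theorem Module.End.one_sub_pow_apply_of_apply_eq_smul {T : Module.End R M} {μ : R} {v : M}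
    (hv : T v = μ • v) (m : ℕ) : ((1 - T) ^ m) v = (1 - μ) ^ m • v := by
  induction m with
  | zero => simp
  | succ k ih =>
    rw [pow_succ, Module.End.mul_apply, LinearMap.sub_apply, Module.End.one_apply, hv, map_sub,
      map_smul, ih]
    module

end

section

variable {E : Type*} [NormedAddCommGroup E] [InnerProductSpace ℝ E] [FiniteDimensional ℝ E]
  {T : E →ₗ[ℝ] E}

theorem LinearMap.IsSymmetric.tendsto_one_sub_pow_apply_of_mem_orthogonal_ker
    (hT : T.IsSymmetric) (hspec : spectrum ℝ T ⊆ Set.Ico 0 2) {y : E}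
    (hy : y ∈ (LinearMap.ker T)ᗮ) :
    Tendsto (fun m : ℕ => ((1 - T) ^ m) y) atTop (𝓝 0) := by
  let v := hT.eigenvectorBasis rfl
  let μ := hT.eigenvalues rfl
  have happly : ∀ i, T (v i) = μ i • v i := hT.apply_eigenvectorBasis rfl
  have hexpand : ∀ m : ℕ, ((1 - T) ^ m) y = ∑ i, ((1 - μ i) ^ m * inner ℝ (v i) y) • v i := by
    intro m
    conv_lhs => rw [← v.sum_repr' y, map_sum]
    refine Finset.sum_congr rfl fun i _ => ?_
    rw [map_smul, Module.End.one_sub_pow_apply_of_apply_eq_smul (happly i), smul_smul, mul_comm]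
  have hcoeff : ∀ i, Tendsto (fun m : ℕ => (1 - μ i) ^ m * inner ℝ (v i) y) atTop (𝓝 0) := by
    intro i
    by_cases hμ : μ i = 0
    · have hker : v i ∈ LinearMap.ker T := by simpa [hμ] using happly i
      simp [Submodule.inner_right_of_mem_orthogonal hker hy]
    · obtain ⟨hμ0, hμ2⟩ : μ i ∈ Set.Ico 0 2 :=
        hspec (hT.hasEigenvalue_eigenvalues rfl i).mem_spectrum
      have hcontract : |1 - μ i| < 1 := by
        rw [abs_lt]
        constructor <;> linarith [lt_of_le_of_ne hμ0 (Ne.symm hμ)]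
      simpa using (tendsto_pow_atTop_nhds_zero_of_abs_lt_one hcontract).mul_const _
  simp_rw [hexpand]
  simpa using tendsto_finsetSum Finset.univ fun i _ => (hcoeff i).smul_const (v i)

theorem LinearMap.IsSymmetric.tendsto_one_sub_pow_apply (hT : T.IsSymmetric)
    (hspec : spectrum ℝ T ⊆ Set.Ico 0 2) (x : E) :
    Tendsto (fun m : ℕ => ((1 - T) ^ m) x) atTop
      (𝓝 ((LinearMap.ker T).orthogonalProjectionOnto x : E)) := by
  set K := LinearMap.ker T
  set p := K.starProjection x
  have hfixed : ∀ m : ℕ, ((1 - T) ^ m) p = p := fun m => by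
    have hp : T p = (0 : ℝ) • p := by
      rw [zero_smul, ← LinearMap.mem_ker]
      exact K.starProjection_apply_mem x
    simpa using Module.End.one_sub_pow_apply_of_apply_eq_smul hp m
  have hsplit : ∀ m : ℕ, ((1 - T) ^ m) x = p + ((1 - T) ^ m) (x - p) := fun m => by
    rw [map_sub, hfixed, add_sub_cancel]
  simp_rw [hsplit]
  simpa using tendsto_const_nhds.add
    (hT.tendsto_one_sub_pow_apply_of_mem_orthogonal_ker hspec (K.sub_starProjection_mem_orthogonal x))

theorem LinearMap.IsSymmetric.spectrum_mul_self_subset_Icc {A : E →ₗ[ℝ] E} (hA : A.IsSymmetric)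
    (hcontract : ∀ x, ‖A x‖ ≤ ‖x‖) : spectrum ℝ (A * A) ⊆ Set.Icc 0 1 := by
  intro μ hμ
  obtain ⟨v, hv⟩ := (Module.End.hasEigenvalue_iff_mem_spectrum.mpr hμ).exists_hasEigenvector
  have hv0 : 0 < ‖v‖ ^ 2 := by positivity [hv.2]
  have hrayleigh : μ * ‖v‖ ^ 2 = ‖A v‖ ^ 2 := by
    rw [← real_inner_self_eq_norm_sq, ← real_inner_self_eq_norm_sq, ← real_inner_smul_left,
      ← hv.apply_eq_smul, Module.End.mul_apply, hA]
  constructor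
  · nlinarith [sq_nonneg ‖A v‖]
  · nlinarith [pow_le_pow_left₀ (norm_nonneg _) (hcontract v) 2]

end

theorem Matrix.norm_toEuclideanLin_le_of_mem_doublyStochastic {ι : Type*} [Fintype ι]
    [DecidableEq ι] {B : Matrix ι ι ℝ} (hB : B ∈ doublyStochastic ℝ ι)
    (x : EuclideanSpace ℝ ι) : ‖toEuclideanLin B x‖ ≤ ‖x‖ := by
  obtain ⟨hnonneg, hrow, hcol⟩ := mem_doublyStochastic_iff_sum.mp hB
  have hjensen : ∀ i, (∑ j, B i j * x j) ^ 2 ≤ ∑ j, B i j * x j ^ 2 := fun i => by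
    simpa [hrow i] using Finset.sum_sq_le_sum_mul_sum_of_sq_le_mul Finset.univ
      (fun j _ => hnonneg i j) (fun j _ => mul_nonneg (hnonneg i j) (sq_nonneg (x j)))
      (fun j _ => le_of_eq (by ring))
  have hsq : ‖toEuclideanLin B x‖ ^ 2 ≤ ‖x‖ ^ 2 := by
    simp only [EuclideanSpace.norm_sq_eq, Real.norm_eq_abs, sq_abs, toLpLin_apply, mulVec,
      dotProduct]
    calc ∑ i, (∑ j, B i j * x j) ^ 2 ≤ ∑ i, ∑ j, B i j * x j ^ 2 :=
          Finset.sum_le_sum fun i _ => hjensen i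
      _ = ∑ j, (∑ i, B i j) * x j ^ 2 := by rw [Finset.sum_comm]; simp only [Finset.sum_mul]
      _ = ∑ j, x j ^ 2 := by simp only [hcol, one_mul]
  exact (pow_le_pow_iff_left₀ (norm_nonneg _) (norm_nonneg _) two_ne_zero).mp hsq

theorem DB_IF_convergence_general
    (n : ℕ) (B : Matrix (Fin n) (Fin n) ℝ)
    (hSym : Bᵀ = B) (hNonneg : ∀ i j, 0 ≤ B i j) (hRow : ∀ i, ∑ j, B i j = 1)
    (s₀ : EuclideanSpace ℝ (Fin n)) :
    Tendsto (fun m : ℕ => Matrix.toEuclideanLin ((1 - B * B) ^ m) s₀) atTop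
      (nhds ((Submodule.orthogonalProjectionOnto (LinearMap.ker (Matrix.toEuclideanLin (B * B))) s₀ :
        EuclideanSpace ℝ (Fin n)))) := by
  have hcol : ∀ j, ∑ i, B i j = 1 := fun j =>
    (Finset.sum_congr rfl fun i _ => congrFun (congrFun hSym j) i).trans (hRow j)
  have hdoubly : B ∈ doublyStochastic ℝ (Fin n) :=
    mem_doublyStochastic_iff_sum.mpr ⟨hNonneg, hRow, hcol⟩
  have hA : (toEuclideanLin B).IsSymmetric := isSymmetric_toEuclideanLin_iff.mpr <| by
    rw [IsHermitian, conjTranspose_eq_transpose_of_trivial, hSym]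
  have hW : toEuclideanLin (B * B) = toEuclideanLin B * toEuclideanLin B :=
    map_mul (toLpLinAlgEquiv 2) B B
  have hWsym : (toEuclideanLin (B * B)).IsSymmetric := hW ▸ hA.mul_of_commute hA (.refl _)
  have hspec : spectrum ℝ (toEuclideanLin (B * B)) ⊆ Set.Ico 0 2 := hW ▸
    (hA.spectrum_mul_self_subset_Icc (norm_toEuclideanLin_le_of_mem_doublyStochastic hdoubly)).trans
      (Set.Icc_subset_Ico_right one_lt_two)
  have hpow : ∀ m : ℕ, toEuclideanLin ((1 - B * B) ^ m) = (1 - toEuclideanLin (B * B)) ^ m :=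
    fun m => (map_pow (toLpLinAlgEquiv 2) _ m).trans <| by rw [map_sub, map_one]; rfl
  simp only [hpow]
  exact hWsym.tendsto_one_sub_pow_apply hspec s₀

/-- Theorem 5.1 (DB-IF convergence): if `B` is symmetric and row-stochastic and
`W = B·B`, then `(I - W)^m s₀` converges to the orthogonal projection of `s₀`
onto `ker W`. -/
theorem DB_IF_convergence
    (n : ℕ) (hn : 0 < n) (B : Matrix (Fin n) (Fin n) ℝ)
    (hSym : Bᵀ = B) (hNonneg : ∀ i j, 0 ≤ B i j) (hRow : ∀ i, ∑ j, B i j = 1)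
    (s₀ : EuclideanSpace ℝ (Fin n)) :
    Tendsto (fun m : ℕ => Matrix.toEuclideanLin ((1 - B * B) ^ m) s₀) atTop
      (nhds ((Submodule.orthogonalProjectionOnto (LinearMap.ker (Matrix.toEuclideanLin (B * B))) s₀ :
        EuclideanSpace ℝ (Fin n)))) :=
  DB_IF_convergence_general n B hSym hNonneg hRow s₀
end
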